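/- arXiv:1110.4243 — 2 statements merged into one kernel-verified Lean document; each statement's English description precedes it below -/
import Mathlib

section
/- Let p be odd, P and Q be (p,q)-quasihomogeneous polynomials of degrees p-1+m and q-1+m, η(x,y) = p x Q - q y P, and let λ ∈ ℝ with η(1,λ) = 0. Then the function V(x,y) = y^p - λ^p x^q is an invariant curve: the derivative p y^{p-1} Q(x,y) - q λ^p x^{q-1} P(x,y) vanishes at every point (x,y) with x > 0 and y^p = λ^p x^q. -/
/-- If η(1,λ) = 0 then V(x,y) = y^p - λ^p x^q is an invariant curve: its derivative
along the flow vanishes on the set { (x,y) : x > 0, y^p = λ^p x^q }. -/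
theorem invariant_curve (p q m : ℕ) (hp : 0 < p) (hpodd : Odd p) (hq : 0 < q)
    (hm : 0 < m) (P Q : ℝ → ℝ → ℝ)
    (hP : ∀ l x y : ℝ, P (l ^ p * x) (l ^ q * y) = l ^ (p - 1 + m) * P x y)
    (hQ : ∀ l x y : ℝ, Q (l ^ p * x) (l ^ q * y) = l ^ (q - 1 + m) * Q x y)
    (lam : ℝ) (heta : (p : ℝ) * Q 1 lam - (q : ℝ) * lam * P 1 lam = 0) :
    ∀ x y : ℝ, 0 < x → y ^ p = lam ^ p * x ^ q →
      (p : ℝ) * y ^ (p - 1) * Q x y - (q : ℝ) * lam ^ p * x ^ (q - 1) * P x y = 0 := by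
  intro x y hx hV
  obtain ⟨p', rfl⟩ : ∃ p', p = p' + 1 := ⟨p - 1, by omega⟩
  obtain ⟨q', rfl⟩ : ∃ q', q = q' + 1 := ⟨q - 1, by omega⟩
  set l : ℝ := x ^ ((p' + 1 : ℝ)⁻¹) with hl
  have hlpos : 0 < l := Real.rpow_pos_of_pos hx _
  have hlp : l ^ (p' + 1) = x := by
    rw [hl, ← Real.rpow_natCast (x ^ ((p' + 1 : ℝ)⁻¹)) (p' + 1), ← Real.rpow_mul hx.le]
    push_cast
    rw [inv_mul_cancel₀ (by positivity), Real.rpow_one]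
  have hy : y = lam * l ^ (q' + 1) := by
    have h2 : y ^ (p' + 1) = (lam * l ^ (q' + 1)) ^ (p' + 1) := by
      rw [hV, ← hlp]; ring
    have hinj : Function.Injective (fun a : ℝ => a ^ (p' + 1)) :=
      (Odd.strictMono_pow hpodd).injective
    exact hinj h2
  have hPx : P x y = l ^ (p' + m) * P 1 lam := by
    have := hP l 1 lam
    rw [mul_one, Nat.add_sub_cancel] at this
    rw [← hlp, hy, mul_comm lam _, this]
  have hQx : Q x y = l ^ (q' + m) * Q 1 lam := by
    have := hQ l 1 lam
    rw [mul_one, Nat.add_sub_cancel] at this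
    rw [← hlp, hy, mul_comm lam _, this]
  rw [hPx, hQx, hy, ← hlp]
  simp only [Nat.add_sub_cancel]
  have key : ((p' + 1 : ℕ) : ℝ) * Q 1 lam = ((q' + 1 : ℕ) : ℝ) * lam * P 1 lam := by
    linarith [heta]
  calc ((p' + 1 : ℕ) : ℝ) * (lam * l ^ (q' + 1)) ^ p' * (l ^ (q' + m) * Q 1 lam) -
        ((q' + 1 : ℕ) : ℝ) * lam ^ (p' + 1) * (l ^ (p' + 1)) ^ q' * (l ^ (p' + m) * P 1 lam)
      = lam ^ p' * l ^ ((q' + 1) * p' + (q' + m)) *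
          (((p' + 1 : ℕ) : ℝ) * Q 1 lam - ((q' + 1 : ℕ) : ℝ) * lam * P 1 lam) := by
        have he : (q' + 1) * p' + (q' + m) = (p' + 1) * q' + (p' + m) := by ring
        rw [mul_sub]
        congr 1
        · ring
        · rw [he]; ring
    _ = 0 := by rw [key]; ring
end

section
/- Let p, q, m be positive integers with gcd(p,q)=1, and suppose there exist nonnegative integers r₁ and r₄ such that p+q+m-1 = (r₁+1)·p·q and m-1 = (r₄-1)·p·q (with r₄ ≥ 1). Then p = q = 1 and r₁ = r₄. -/
/-- Lemma 4.1(a.1): if p+q+m-1 = (r₁+1)pq and m-1 = (r₄-1)pq with gcd(p,q)=1,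
then p = q = 1 and r₁ = r₄. -/
theorem theta1_inter_theta4 (p q m r₁ r₄ : ℕ) (hp : 0 < p) (hq : 0 < q) (hm : 0 < m)
    (hcop : Nat.gcd p q = 1) (hr₄ : 1 ≤ r₄)
    (h1 : p + q + m - 1 = (r₁ + 1) * p * q)
    (h4 : m - 1 = (r₄ - 1) * p * q) :
    p = 1 ∧ q = 1 ∧ r₁ = r₄ := by
  have key : p + q + (r₄ - 1) * p * q = (r₁ + 1) * p * q := by omega
  have hq' : q = (r₁ + 1) * p * q - (r₄ - 1) * p * q - p := by omega
  have hp' : p = (r₁ + 1) * p * q - (r₄ - 1) * p * q - q := by omega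
  have hpq : p ∣ q := by
    rw [hq']
    exact Nat.dvd_sub (Nat.dvd_sub ⟨(r₁+1)*q, by ring⟩ ⟨(r₄-1)*q, by ring⟩) dvd_rfl
  have hqp : q ∣ p := by
    rw [hp']
    exact Nat.dvd_sub (Nat.dvd_sub ⟨(r₁+1)*p, by ring⟩ ⟨(r₄-1)*p, by ring⟩) dvd_rfl
  have hpe : p = q := Nat.dvd_antisymm hpq hqp
  have hq1 : q = 1 := by rw [hpe] at hcop; simpa using hcop
  have hp1 : p = 1 := by omega
  subst hp1 hq1
  simp only [mul_one] at h1 h4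
  exact ⟨rfl, rfl, by omega⟩
end
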